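/- arXiv:2404.04775 — 5 statements merged into one kernel-verified Lean document; each statement's English description precedes it below -/
import Mathlib

section
/- Let A, G, Y be random variables taking values in finite sets, and let C be a conditioning random variable. Suppose (i) P(A = a | Y, C) = P(A = a | C) for all a (treatment unconfoundedness), and (ii) P(G = g | A, Y, C) = P(G = g | A, C) for all g (network unconfoundedness). Let h be a deterministic function and define the exposure E = h(A, G). Then P(E = e | Y, C) = P(E = e | C) for all e; that is, the exposure E is conditionally independent of Y given C. -/
open Classical

/-- Probability of an event under a weight function on a finite sample space. -/
noncomputable def Pr {Ω : Type*} [Fintype Ω] (w : Ω → ℝ) (p : Ω → Prop) : ℝ :=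
  ∑ ω, if p ω then w ω else 0

/-- Conditional probability P(p | q). -/
noncomputable def CPr {Ω : Type*} [Fintype Ω] (w : Ω → ℝ) (p q : Ω → Prop) : ℝ :=
  Pr w (fun ω => p ω ∧ q ω) / Pr w q

/-!
Decompose the event `h(A, G) = e` into the atoms `{G = g, A = a}` with `h a g = e`. On each
atom the chain rule gives `P(G, A | Y, C) = P(G | A, Y, C) P(A | Y, C)`, and the two
unconfoundedness hypotheses remove `Y` from both factors; summing over the atoms removes it
from `P(E = e | Y, C)`.
-/

section ConditionalProbability

variable {Ω : Type*} [Fintype Ω] {w : Ω → ℝ}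

theorem Pr_mono (hw : ∀ ω, 0 ≤ w ω) {p q : Ω → Prop} (hpq : ∀ ω, p ω → q ω) :
    Pr w p ≤ Pr w q :=
  Finset.sum_le_sum fun ω _ => by
    split_ifs with hp hq
    exacts [le_rfl, absurd (hpq ω hp) hq, hw ω, le_rfl]

theorem CPr_and_eq_mul {p q r : Ω → Prop} (hqr : Pr w (fun ω => q ω ∧ r ω) ≠ 0) :
    CPr w (fun ω => p ω ∧ q ω) r = CPr w p (fun ω => q ω ∧ r ω) * CPr w q r := by
  simp only [CPr, and_assoc]
  exact (div_mul_div_cancel₀ hqr).symm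

theorem Pr_comp_and_eq_sum_fiber {δ : Type*} [DecidableEq δ] (F : Ω → δ)
    (P : δ → Prop) [DecidablePred P] (r : Ω → Prop) :
    Pr w (fun ω => P (F ω) ∧ r ω)
      = ∑ x ∈ (Finset.univ.image F).filter P, Pr w (fun ω => F ω = x ∧ r ω) := by
  simp only [Pr]
  rw [Finset.sum_comm]
  refine Finset.sum_congr rfl fun ω _ => ?_
  by_cases hr : r ω <;> simp [hr, Finset.sum_ite_eq]

theorem CPr_comp_eq_sum_fiber {δ : Type*} [DecidableEq δ] (F : Ω → δ)
    (P : δ → Prop) [DecidablePred P] (r : Ω → Prop) :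
    CPr w (fun ω => P (F ω)) r
      = ∑ x ∈ (Finset.univ.image F).filter P, CPr w (fun ω => F ω = x) r := by
  rw [CPr, Pr_comp_and_eq_sum_fiber, Finset.sum_div]
  rfl

theorem CPr_and_eq_of_unconfounded (hw : ∀ ω, 0 ≤ w ω) {a g y c : Ω → Prop}
    (hpos : 0 < Pr w (fun ω => a ω ∧ g ω ∧ y ω ∧ c ω))
    (ha : CPr w a (fun ω => y ω ∧ c ω) = CPr w a c)
    (hg : CPr w g (fun ω => a ω ∧ y ω ∧ c ω) = CPr w g (fun ω => a ω ∧ c ω)) :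
    CPr w (fun ω => g ω ∧ a ω) (fun ω => y ω ∧ c ω)
      = CPr w (fun ω => g ω ∧ a ω) c := by
  have hay : Pr w (fun ω => a ω ∧ y ω ∧ c ω) ≠ 0 :=
    (hpos.trans_le (Pr_mono hw fun _ ⟨hA, _, hY, hC⟩ => ⟨hA, hY, hC⟩)).ne'
  have hac : Pr w (fun ω => a ω ∧ c ω) ≠ 0 :=
    (hpos.trans_le (Pr_mono hw fun _ ⟨hA, _, _, hC⟩ => ⟨hA, hC⟩)).ne'
  rw [CPr_and_eq_mul hay, CPr_and_eq_mul hac, hg, ha]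

end ConditionalProbability

theorem exposure_unconfoundedness_general
    {Ω α γ β κ η : Type*} [Fintype Ω]
    (w : Ω → ℝ) (hw : ∀ ω, 0 ≤ w ω)
    (A : Ω → α) (G : Ω → γ) (Y : Ω → β) (C : Ω → κ) (h : α → γ → η)
    (hpos : ∀ (a : α) (g : γ) (y : β) (c : κ),
      0 < Pr w (fun ω => A ω = a ∧ G ω = g ∧ Y ω = y ∧ C ω = c))
    (hA : ∀ (a : α) (y : β) (c : κ),
      CPr w (fun ω => A ω = a) (fun ω => Y ω = y ∧ C ω = c)
        = CPr w (fun ω => A ω = a) (fun ω => C ω = c))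
    (hG : ∀ (g : γ) (a : α) (y : β) (c : κ),
      CPr w (fun ω => G ω = g) (fun ω => A ω = a ∧ Y ω = y ∧ C ω = c)
        = CPr w (fun ω => G ω = g) (fun ω => A ω = a ∧ C ω = c))
    (e : η) (y : β) (c : κ) :
    CPr w (fun ω => h (A ω) (G ω) = e) (fun ω => Y ω = y ∧ C ω = c)
      = CPr w (fun ω => h (A ω) (G ω) = e) (fun ω => C ω = c) := by
  let F : Ω → γ × α := fun ω => (G ω, A ω)
  let P : γ × α → Prop := fun x => h x.2 x.1 = e
  calc CPr w (fun ω => h (A ω) (G ω) = e) (fun ω => Y ω = y ∧ C ω = c)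
      = ∑ x ∈ (Finset.univ.image F).filter P,
          CPr w (fun ω => F ω = x) (fun ω => Y ω = y ∧ C ω = c) :=
        CPr_comp_eq_sum_fiber F P _
    _ = ∑ x ∈ (Finset.univ.image F).filter P, CPr w (fun ω => F ω = x) (fun ω => C ω = c) :=
        Finset.sum_congr rfl fun x _ => by
          simpa only [F, Prod.ext_iff] using
            CPr_and_eq_of_unconfounded hw (hpos x.2 x.1 y c) (hA x.2 y c) (hG x.1 x.2 y c)
    _ = CPr w (fun ω => h (A ω) (G ω) = e) (fun ω => C ω = c) :=
        (CPr_comp_eq_sum_fiber F P _).symm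

/-- Exposure unconfoundedness: if the treatment `A` and the network `G` are
unconfounded given `C`, then the exposure `E = h(A, G)` is unconfounded given `C`. -/
theorem exposure_unconfoundedness
    {Ω α γ β κ η : Type*} [Fintype Ω]
    (w : Ω → ℝ) (hw : ∀ ω, 0 ≤ w ω) (hsum : ∑ ω, w ω = 1)
    (A : Ω → α) (G : Ω → γ) (Y : Ω → β) (C : Ω → κ) (h : α → γ → η)
    (hpos : ∀ (a : α) (g : γ) (y : β) (c : κ),
      0 < Pr w (fun ω => A ω = a ∧ G ω = g ∧ Y ω = y ∧ C ω = c))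
    (hA : ∀ (a : α) (y : β) (c : κ),
      CPr w (fun ω => A ω = a) (fun ω => Y ω = y ∧ C ω = c)
        = CPr w (fun ω => A ω = a) (fun ω => C ω = c))
    (hG : ∀ (g : γ) (a : α) (y : β) (c : κ),
      CPr w (fun ω => G ω = g) (fun ω => A ω = a ∧ Y ω = y ∧ C ω = c)
        = CPr w (fun ω => G ω = g) (fun ω => A ω = a ∧ C ω = c))
    (e : η) (y : β) (c : κ) :
    CPr w (fun ω => h (A ω) (G ω) = e) (fun ω => Y ω = y ∧ C ω = c)
      = CPr w (fun ω => h (A ω) (G ω) = e) (fun ω => C ω = c) :=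
  exposure_unconfoundedness_general w hw A G Y C h hpos hA hG e y c
end

section
/- Let I₂ be a nonempty finite set of matched triples (t_e, t_{u1}, t_{u2}). Suppose Y_t(e) = β_0 + β_1·e + β_2·t + ε_t(e) with mean-zero errors, and the matching satisfies |Σ_{I₂}(t_e − (t_{u1}+t_{u2})/2)| ≤ δ|I₂|. Then the 1-2 matching estimator τ̂ = (1/|I₂|)·Σ_{I₂} (Y_{t_e}(1) − (Y_{t_{u1}}(0)+Y_{t_{u2}}(0))/2) satisfies |E[τ̂] − β_1| ≤ δ|β_2|. -/
/-!
The estimator is linear in the outcomes, so its expectation is the estimator applied to the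
mean outcomes `β0 + β1 e + β2 t`. On those, each contrast equals `β1` plus `β2` times the time
imbalance of its triple, so the bias is `β2` times the average imbalance, which the balance
constraint bounds by `δ`.
-/

open MeasureTheory Finset

noncomputable section

/-- `q = (t_e, t_{u1}, t_{u2})`, and `y t e` is the outcome at time `t` under exposure `e`. -/
def matched12Contrast (y : ℝ → ℝ → ℝ) (q : ℝ × ℝ × ℝ) : ℝ :=
  y q.1 1 - (y q.2.1 0 + y q.2.2 0) / 2

def matched12Estimator (I : Finset (ℝ × ℝ × ℝ)) (y : ℝ → ℝ → ℝ) : ℝ :=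
  (#I : ℝ)⁻¹ * ∑ q ∈ I, matched12Contrast y q

def timeImbalance (q : ℝ × ℝ × ℝ) : ℝ :=
  q.1 - (q.2.1 + q.2.2) / 2

end

section Expectation

variable {Ω : Type*} [MeasurableSpace Ω] {μ : Measure Ω} {Y : ℝ → ℝ → Ω → ℝ}

theorem integrable_matched12Contrast (hY : ∀ t e, Integrable (Y t e) μ) (q : ℝ × ℝ × ℝ) :
    Integrable (fun ω ↦ matched12Contrast (fun t e ↦ Y t e ω) q) μ :=
  (hY _ _).sub (((hY _ _).add (hY _ _)).div_const 2)

theorem integral_matched12Contrast (hY : ∀ t e, Integrable (Y t e) μ) (q : ℝ × ℝ × ℝ) :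
    ∫ ω, matched12Contrast (fun t e ↦ Y t e ω) q ∂μ =
      matched12Contrast (fun t e ↦ ∫ ω, Y t e ω ∂μ) q := by
  have hcontrol : Integrable (fun ω ↦ (Y q.2.1 0 ω + Y q.2.2 0 ω) / 2) μ :=
    ((hY _ _).add (hY _ _)).div_const 2
  simp only [matched12Contrast]
  rw [integral_sub (hY _ _) hcontrol, integral_div, integral_add (hY _ _) (hY _ _)]

theorem integral_matched12Estimator (hY : ∀ t e, Integrable (Y t e) μ)
    (I : Finset (ℝ × ℝ × ℝ)) :
    ∫ ω, matched12Estimator I (fun t e ↦ Y t e ω) ∂μ =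
      matched12Estimator I (fun t e ↦ ∫ ω, Y t e ω ∂μ) := by
  unfold matched12Estimator
  rw [integral_const_mul, integral_finsetSum _ fun q _ ↦ integrable_matched12Contrast hY q]
  simp_rw [integral_matched12Contrast hY]

variable [IsProbabilityMeasure μ] {ε : ℝ → ℝ → Ω → ℝ} {m : ℝ → ℝ → ℝ}

theorem integrable_of_eq_add_noise (hint : ∀ t e, Integrable (ε t e) μ)
    (hY : ∀ t e ω, Y t e ω = m t e + ε t e ω) (t e : ℝ) : Integrable (Y t e) μ := by
  rw [funext (hY t e)]
  exact (integrable_const (m t e)).add (hint t e)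

theorem integral_of_eq_add_noise (hint : ∀ t e, Integrable (ε t e) μ)
    (hmean : ∀ t e, ∫ ω, ε t e ω ∂μ = 0) (hY : ∀ t e ω, Y t e ω = m t e + ε t e ω)
    (t e : ℝ) : ∫ ω, Y t e ω ∂μ = m t e := by
  simp only [hY, integral_add (integrable_const _) (hint t e), hmean, integral_const,
    probReal_univ, one_smul, add_zero]

end Expectation

theorem matched12Contrast_linear (β0 β1 β2 : ℝ) (q : ℝ × ℝ × ℝ) :
    matched12Contrast (fun t e ↦ β0 + β1 * e + β2 * t) q = β1 + β2 * timeImbalance q := by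
  unfold matched12Contrast timeImbalance
  ring

theorem matched12Estimator_linear {I : Finset (ℝ × ℝ × ℝ)} (hI : I.Nonempty)
    (β0 β1 β2 : ℝ) :
    matched12Estimator I (fun t e ↦ β0 + β1 * e + β2 * t) =
      β1 + β2 * ((#I : ℝ)⁻¹ * ∑ q ∈ I, timeImbalance q) := by
  have hcard : (#I : ℝ) ≠ 0 := by exact_mod_cast hI.card_ne_zero
  simp only [matched12Estimator, matched12Contrast_linear, sum_add_distrib, sum_const,
    nsmul_eq_mul, ← mul_sum]
  field_simp

theorem abs_inv_card_mul_sum_le {ι : Type*} {I : Finset ι} (hI : I.Nonempty) {f : ι → ℝ}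
    {δ : ℝ} (h : |∑ i ∈ I, f i| ≤ δ * #I) : |(#I : ℝ)⁻¹ * ∑ i ∈ I, f i| ≤ δ := by
  have hcard : (0 : ℝ) < #I := by exact_mod_cast hI.card_pos
  rw [abs_mul, abs_inv, Nat.abs_cast, inv_mul_le_iff₀ hcard, mul_comm]
  exact h

theorem matching12_bias_time_only_general
    {Ω : Type*} [MeasurableSpace Ω] (μ : Measure Ω) [IsProbabilityMeasure μ]
    (I₂ : Finset (ℝ × ℝ × ℝ)) (hI : I₂.Nonempty)
    (β0 β1 β2 δ : ℝ)
    (ε : ℝ → ℝ → Ω → ℝ)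
    (hint : ∀ t e, Integrable (ε t e) μ)
    (hmean : ∀ t e, ∫ ω, ε t e ω ∂μ = 0)
    (Y : ℝ → ℝ → Ω → ℝ)
    (hY : ∀ t e ω, Y t e ω = β0 + β1 * e + β2 * t + ε t e ω)
    (hbal : |∑ q ∈ I₂, (q.1 - (q.2.1 + q.2.2) / 2)| ≤ δ * I₂.card) :
    |(∫ ω, (I₂.card : ℝ)⁻¹ *
        ∑ q ∈ I₂, (Y q.1 1 ω - (Y q.2.1 0 ω + Y q.2.2 0 ω) / 2) ∂μ) - β1|
      ≤ δ * |β2| := by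
  have hmeanY : (fun t e ↦ ∫ ω, Y t e ω ∂μ) = fun t e ↦ β0 + β1 * e + β2 * t :=
    funext₂ <| integral_of_eq_add_noise hint hmean hY
  change |∫ ω, matched12Estimator I₂ (fun t e ↦ Y t e ω) ∂μ - β1| ≤ δ * |β2|
  rw [integral_matched12Estimator (integrable_of_eq_add_noise hint hY), hmeanY,
    matched12Estimator_linear hI, add_sub_cancel_left, abs_mul, mul_comm δ]
  exact mul_le_mul_of_nonneg_left (abs_inv_card_mul_sum_le hI hbal) (abs_nonneg β2)

/-- Time-only bias bound for the Matching 1-2 estimator: each exposed time is matched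
to two unexposed times, the counterfactual is the average of the two, and under the
average time-balance constraint the bias is at most δ|β₂|. -/
theorem matching12_bias_time_only
    {Ω : Type*} [MeasurableSpace Ω] (μ : Measure Ω) [IsProbabilityMeasure μ]
    (I₂ : Finset (ℝ × ℝ × ℝ)) (hI : I₂.Nonempty)
    (β0 β1 β2 δ : ℝ) (hδ : 0 ≤ δ)
    (ε : ℝ → ℝ → Ω → ℝ)
    (hint : ∀ t e, Integrable (ε t e) μ)
    (hmean : ∀ t e, ∫ ω, ε t e ω ∂μ = 0)
    (Y : ℝ → ℝ → Ω → ℝ)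
    (hY : ∀ t e ω, Y t e ω = β0 + β1 * e + β2 * t + ε t e ω)
    (hbal : |∑ q ∈ I₂, (q.1 - (q.2.1 + q.2.2) / 2)| ≤ δ * I₂.card) :
    |(∫ ω, (I₂.card : ℝ)⁻¹ *
        ∑ q ∈ I₂, (Y q.1 1 ω - (Y q.2.1 0 ω + Y q.2.2 0 ω) / 2) ∂μ) - β1|
      ≤ δ * |β2| :=
  matching12_bias_time_only_general μ I₂ hI β0 β1 β2 δ ε hint hmean Y hY hbal
end

section
/- Let I₁ be a finite set of pairs (t_e,t_u) and I₂ a finite set of triples (t_e,t_{u1},t_{u2}) with |I₁| + |I₂| = |I| > 0. Suppose Y_t(e) = β_0 + β_1 e + β_2 t + ⟨β_3, W_t⟩ + ε_t(e) with mean-zero errors, and the combined balance constraints hold: |Σ_{I₁}(t_e−t_u) + Σ_{I₂}(t_e − (t_{u1}+t_{u2})/2)| ≤ δ|I|, and componentwise |Σ_{I₁}(W_{t_e}−W_{t_u}) + Σ_{I₂}(W_{t_e} − (W_{t_{u1}}+W_{t_{u2}})/2)| ≤ δ'|I|·1. Then the combined 1-1/2 matching estimator τ̂ = (1/|I|)·[Σ_{I₁}(Y_{t_e}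 − Y_{t_u}) + Σ_{I₂}(Y_{t_e} − (Y_{t_{u1}}+Y_{t_{u2}})/2)] satisfies |E[τ̂] − β_1| ≤ δ|β_2| + δ'‖β_3‖₁. -/
/-!
The estimator is `|I|⁻¹` times a linear functional of the potential-outcome surface
`(t, e) ↦ Y_t(e)` that depends on finitely many of its values, so its expectation is the same
functional applied to `(t, e) ↦ E[Y_t(e)] = β₀ + β₁e + β₂t + ⟨β₃, W_t⟩`. That functional
annihilates constants, sends `e` to `|I|` (every summand compares an exposed with unexposed
periods), and sends `t` and `W_t` to the time and covariate imbalances, so the bias is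
`|I|⁻¹ (β₂ · imbalance_t + ⟨β₃, imbalance_W⟩)`, which the balance constraints bound.
-/

open MeasureTheory

/-- `f t e` is read as the outcome at period `t` under exposure `e`; `I₁` holds pairs
`(t_e, t_u)` and `I₂` triples `(t_e, t_u₁, t_u₂)`. -/
noncomputable def matchedContrast (I₁ : Finset (ℝ × ℝ)) (I₂ : Finset (ℝ × ℝ × ℝ)) :
    (ℝ → ℝ → ℝ) →ₗ[ℝ] ℝ where
  toFun f := (∑ p ∈ I₁, (f p.1 1 - f p.2 0)) + ∑ q ∈ I₂, (f q.1 1 - (f q.2.1 0 + f q.2.2 0) / 2)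
  map_add' f g := by
    simp only [Pi.add_apply]
    rw [add_add_add_comm, ← Finset.sum_add_distrib, ← Finset.sum_add_distrib]
    congr 1 <;> exact Finset.sum_congr rfl fun _ _ => by ring
  map_smul' c f := by
    simp only [Pi.smul_apply, smul_eq_mul, RingHom.id_apply, mul_add, Finset.mul_sum]
    congr 1 <;> exact Finset.sum_congr rfl fun _ _ => by ring

section matchedContrast

variable (I₁ : Finset (ℝ × ℝ)) (I₂ : Finset (ℝ × ℝ × ℝ))

theorem matchedContrast_apply (f : ℝ → ℝ → ℝ) : matchedContrast I₁ I₂ f =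
    (∑ p ∈ I₁, (f p.1 1 - f p.2 0)) + ∑ q ∈ I₂, (f q.1 1 - (f q.2.1 0 + f q.2.2 0) / 2) :=
  rfl

theorem matchedContrast_const (a : ℝ) : matchedContrast I₁ I₂ (fun _ _ => a) = 0 := by
  simp [matchedContrast_apply]

theorem matchedContrast_exposure : matchedContrast I₁ I₂ (fun _ e => e) = I₁.card + I₂.card := by
  simp [matchedContrast_apply]

theorem matchedContrast_linearModel {ι : Type*} [Fintype ι] (a b c : ℝ) (d : ι → ℝ)
    (X : ℝ → ι → ℝ) :
    matchedContrast I₁ I₂ (fun t e => a + b * e + c * t + ∑ i, d i * X t i) =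
      b * (I₁.card + I₂.card) + c * matchedContrast I₁ I₂ (fun t _ => t)
        + ∑ i, d i * matchedContrast I₁ I₂ (fun t _ => X t i) := by
  have hf : (fun t e => a + b * e + c * t + ∑ i, d i * X t i) =
      a • (fun _ _ => 1) + b • (fun _ e => e) + c • (fun t _ => t)
        + ∑ i, d i • (fun t (_ : ℝ) => X t i) := by
    funext t e
    simp [Finset.sum_apply]
  simp only [hf, map_add, map_smul, map_sum, matchedContrast_const, matchedContrast_exposure,
    smul_eq_mul]
  ring

theorem integral_matchedContrast {Ω : Type*} [MeasurableSpace Ω] {μ : Measure Ω}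
    {F : ℝ → ℝ → Ω → ℝ} (hF : ∀ t e, Integrable (F t e) μ) :
    ∫ ω, matchedContrast I₁ I₂ (fun t e => F t e ω) ∂μ =
      matchedContrast I₁ I₂ (fun t e => ∫ ω, F t e ω ∂μ) := by
  have h₁ : ∀ p : ℝ × ℝ, Integrable (fun ω => F p.1 1 ω - F p.2 0 ω) μ :=
    fun p => (hF _ _).sub (hF _ _)
  have h₂ : ∀ q : ℝ × ℝ × ℝ,
      Integrable (fun ω => F q.1 1 ω - (F q.2.1 0 ω + F q.2.2 0 ω) / 2) μ :=
    fun q => (hF _ _).sub (((hF _ _).add (hF _ _)).div_const 2)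
  simp only [matchedContrast_apply]
  rw [integral_add (integrable_finsetSum _ fun p _ => h₁ p)
      (integrable_finsetSum _ fun q _ => h₂ q),
    integral_finsetSum _ fun p _ => h₁ p, integral_finsetSum _ fun q _ => h₂ q]
  congr 1 <;> refine Finset.sum_congr rfl fun _ _ => ?_
  · exact integral_sub (hF _ _) (hF _ _)
  · rw [integral_sub (hF _ _) (by exact ((hF _ _).add (hF _ _)).div_const 2), integral_div,
      integral_add (hF _ _) (hF _ _)]

end matchedContrast

theorem abs_mul_add_sum_mul_le {ι : Type*} [Fintype ι] {S a b c : ℝ} {s d : ι → ℝ}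
    (hS : |S| ≤ a) (hs : ∀ i, |s i| ≤ b) :
    |c * S + ∑ i, d i * s i| ≤ a * |c| + b * ∑ i, |d i| := by
  calc |c * S + ∑ i, d i * s i| ≤ |c * S| + ∑ i, |d i * s i| := by
        grw [abs_add_le, Finset.abs_sum_le_sum_abs]
    _ ≤ |c| * a + ∑ i, |d i| * b := by
        simp only [abs_mul]
        gcongr
        exact hs _
    _ = a * |c| + b * ∑ i, |d i| := by rw [← Finset.sum_mul]; ring

theorem matching112_bias_linear_general
    {Ω : Type*} [MeasurableSpace Ω] (μ : Measure Ω) [IsProbabilityMeasure μ]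
    {pW : ℕ}
    (I₁ : Finset (ℝ × ℝ)) (I₂ : Finset (ℝ × ℝ × ℝ))
    (hn : 0 < I₁.card + I₂.card)
    (β0 β1 β2 : ℝ) (β3 : Fin pW → ℝ) (δ δ' : ℝ)
    (W : ℝ → Fin pW → ℝ)
    (ε : ℝ → ℝ → Ω → ℝ)
    (hint : ∀ t e, Integrable (ε t e) μ)
    (hmean : ∀ t e, ∫ ω, ε t e ω ∂μ = 0)
    (Y : ℝ → ℝ → Ω → ℝ)
    (hY : ∀ t e ω, Y t e ω = β0 + β1 * e + β2 * t + (∑ i, β3 i * W t i) + ε t e ω)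
    (hbal_t : |(∑ p ∈ I₁, (p.1 - p.2)) + ∑ q ∈ I₂, (q.1 - (q.2.1 + q.2.2) / 2)|
        ≤ δ * (I₁.card + I₂.card))
    (hbal_W : ∀ i, |(∑ p ∈ I₁, (W p.1 i - W p.2 i))
          + ∑ q ∈ I₂, (W q.1 i - (W q.2.1 i + W q.2.2 i) / 2)|
        ≤ δ' * (I₁.card + I₂.card)) :
    |(∫ ω, ((I₁.card + I₂.card : ℕ) : ℝ)⁻¹ *
        ((∑ p ∈ I₁, (Y p.1 1 ω - Y p.2 0 ω))
          + ∑ q ∈ I₂, (Y q.1 1 ω - (Y q.2.1 0 ω + Y q.2.2 0 ω) / 2)) ∂μ) - β1|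
      ≤ δ * |β2| + δ' * ∑ i, |β3 i| := by
  have hY' : Y = fun t e ω => (β0 + β1 * e + β2 * t + ∑ i, β3 i * W t i) + ε t e ω := by
    funext t e ω; exact hY t e ω
  have hYint : ∀ t e, Integrable (Y t e) μ := by
    subst hY'; exact fun t e => (integrable_const _).add (hint t e)
  have hEY : (fun t e => ∫ ω, Y t e ω ∂μ) =
      fun t e => β0 + β1 * e + β2 * t + ∑ i, β3 i * W t i := by
    subst hY'; funext t e
    rw [integral_add (integrable_const _) (hint t e), hmean, integral_const]; simp
  have hn' : (0 : ℝ) < I₁.card + I₂.card := by exact_mod_cast hn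
  change |∫ ω, _ * matchedContrast I₁ I₂ (fun t e => Y t e ω) ∂μ - β1| ≤ _
  rw [integral_const_mul, integral_matchedContrast I₁ I₂ hYint, hEY,
    matchedContrast_linearModel]
  set n : ℝ := I₁.card + I₂.card
  set T := ∑ i, β3 i * matchedContrast I₁ I₂ (fun t _ => W t i)
  push_cast
  rw [show n⁻¹ * (β1 * n + β2 * matchedContrast I₁ I₂ (fun t _ => t) + T) - β1
      = n⁻¹ * (β2 * matchedContrast I₁ I₂ (fun t _ => t) + T) by field_simp; ring,
    abs_mul, abs_inv, abs_of_pos hn', inv_mul_le_iff₀ hn']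
  exact (abs_mul_add_sum_mul_le (c := β2) (d := β3) hbal_t hbal_W).trans_eq (by ring)

/-- Bias bound for the hybrid Matching 1-1/2 estimator: matching each exposed period to
one or two unexposed periods, under combined balance constraints for time and covariates,
the bias is at most δ|β₂| + δ'‖β₃‖₁. -/
theorem matching112_bias_linear
    {Ω : Type*} [MeasurableSpace Ω] (μ : Measure Ω) [IsProbabilityMeasure μ]
    {pW : ℕ}
    (I₁ : Finset (ℝ × ℝ)) (I₂ : Finset (ℝ × ℝ × ℝ))
    (hn : 0 < I₁.card + I₂.card)
    (β0 β1 β2 : ℝ) (β3 : Fin pW → ℝ) (δ δ' : ℝ) (hδ : 0 ≤ δ) (hδ' : 0 ≤ δ')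
    (W : ℝ → Fin pW → ℝ)
    (ε : ℝ → ℝ → Ω → ℝ)
    (hint : ∀ t e, Integrable (ε t e) μ)
    (hmean : ∀ t e, ∫ ω, ε t e ω ∂μ = 0)
    (Y : ℝ → ℝ → Ω → ℝ)
    (hY : ∀ t e ω, Y t e ω = β0 + β1 * e + β2 * t + (∑ i, β3 i * W t i) + ε t e ω)
    (hbal_t : |(∑ p ∈ I₁, (p.1 - p.2)) + ∑ q ∈ I₂, (q.1 - (q.2.1 + q.2.2) / 2)|
        ≤ δ * (I₁.card + I₂.card))
    (hbal_W : ∀ i, |(∑ p ∈ I₁, (W p.1 i - W p.2 i))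
          + ∑ q ∈ I₂, (W q.1 i - (W q.2.1 i + W q.2.2 i) / 2)|
        ≤ δ' * (I₁.card + I₂.card)) :
    |(∫ ω, ((I₁.card + I₂.card : ℕ) : ℝ)⁻¹ *
        ((∑ p ∈ I₁, (Y p.1 1 ω - Y p.2 0 ω))
          + ∑ q ∈ I₂, (Y q.1 1 ω - (Y q.2.1 0 ω + Y q.2.2 0 ω) / 2)) ∂μ) - β1|
      ≤ δ * |β2| + δ' * ∑ i, |β3 i| :=
  matching112_bias_linear_general μ I₁ I₂ hn β0 β1 β2 β3 δ δ' W ε hint hmean Y hY hbal_t hbal_W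
end

section
/- Let I₁ and I₂ be the sets of 1-1 and 1-2 matches produced by a feasible solution of the Matching 1-1/2 integer program with time-balance tolerance δ, i.e., satisfying |Σ_{I₁}(t_e − t_u) + Σ_{I₂}(t_e − (t_{u1}+t_{u2})/2)| ≤ δ(|I₁| + |I₂|). Suppose outcomes satisfy Y_t(e) = β_0 + β₁e + β₂t + ε_t with mean-zero errors. Writing D_1 = Σ_{I₁}(t_e − t_u) and D_2 = Σ_{I₂}(t_e − (t_{u1}+t_{u2})/2), the bias of the hybrid estimator equals β₂·(D₁ + D₂)/(|I₁|+|I₂|) and hence is bounded in absolute value by δ·|β₂|, regardless of how the matches are split between types. -/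
open MeasureTheory

/-!
Both the hybrid estimator and the time-imbalance `D₁ + D₂` are values of one linear functional of
the outcome field `(t, e) ↦ Z t e`: the sum of the matched contrasts. Expectation commutes with it,
the expected outcome is affine in `(e, t)`, and the functional sends `e` to `|I₁| + |I₂|` and
constants to `0`, so only the `β₂ t` part of the mean survives, and it contributes `β₂ (D₁ + D₂)`.
-/

/-- `Z t e` is the outcome at time `t` under exposure `e`; a 1-1 match is `(t_e, t_u)` and a
1-2 match is `(t_e, t_{u1}, t_{u2})`. -/
noncomputable def hybridContrast (I₁ : Finset (ℝ × ℝ)) (I₂ : Finset (ℝ × ℝ × ℝ))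
    (Z : ℝ → ℝ → ℝ) : ℝ :=
  (∑ q ∈ I₁, (Z q.1 1 - Z q.2 0)) + ∑ q ∈ I₂, (Z q.1 1 - (Z q.2.1 0 + Z q.2.2 0) / 2)

theorem hybridContrast_affine (I₁ : Finset (ℝ × ℝ)) (I₂ : Finset (ℝ × ℝ × ℝ)) (a b c : ℝ) :
    hybridContrast I₁ I₂ (fun t e => a + b * e + c * t)
      = b * (I₁.card + I₂.card) + c * hybridContrast I₁ I₂ (fun t _ => t) := by
  have h₁ : ∀ q ∈ I₁, (a + b * 1 + c * q.1) - (a + b * 0 + c * q.2) = b + c * (q.1 - q.2) :=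
    fun _ _ => by ring
  have h₂ : ∀ q ∈ I₂,
      (a + b * 1 + c * q.1) - ((a + b * 0 + c * q.2.1) + (a + b * 0 + c * q.2.2)) / 2
      = b + c * (q.1 - (q.2.1 + q.2.2) / 2) := fun _ _ => by ring
  simp only [hybridContrast, Finset.sum_congr rfl h₁, Finset.sum_congr rfl h₂,
    Finset.sum_add_distrib, ← Finset.mul_sum, Finset.sum_const, nsmul_eq_mul]
  ring

theorem integral_hybridContrast {Ω : Type*} [MeasurableSpace Ω] (μ : Measure Ω)
    (I₁ : Finset (ℝ × ℝ)) (I₂ : Finset (ℝ × ℝ × ℝ)) (X : ℝ → ℝ → Ω → ℝ)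
    (hX : ∀ t e, Integrable (X t e) μ) :
    ∫ ω, hybridContrast I₁ I₂ (fun t e => X t e ω) ∂μ
      = hybridContrast I₁ I₂ (fun t e => ∫ ω, X t e ω ∂μ) := by
  have hX₁ : ∀ q : ℝ × ℝ, Integrable (fun ω => X q.1 1 ω - X q.2 0 ω) μ :=
    fun q => (hX _ _).sub (hX _ _)
  have hmid : ∀ q : ℝ × ℝ × ℝ, Integrable (fun ω => (X q.2.1 0 ω + X q.2.2 0 ω) / 2) μ :=
    fun q => ((hX _ _).add (hX _ _)).div_const 2
  have hX₂ : ∀ q : ℝ × ℝ × ℝ,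
      Integrable (fun ω => X q.1 1 ω - (X q.2.1 0 ω + X q.2.2 0 ω) / 2) μ :=
    fun q => (hX _ _).sub (hmid q)
  simp only [hybridContrast]
  rw [integral_add (integrable_finsetSum _ fun q _ => hX₁ q)
      (integrable_finsetSum _ fun q _ => hX₂ q),
    integral_finsetSum _ fun q _ => hX₁ q, integral_finsetSum _ fun q _ => hX₂ q]
  congr 1 <;> refine Finset.sum_congr rfl fun q _ => ?_
  · exact integral_sub (hX _ _) (hX _ _)
  · rw [integral_sub (hX _ _) (hmid q), integral_div,
      integral_add (hX _ _) (hX _ _)]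

theorem abs_mul_div_le_of_abs_le {c D δ n : ℝ} (hn : 0 < n) (hD : |D| ≤ δ * n) :
    |c * D / n| ≤ δ * |c| := by
  rw [abs_div, abs_mul, abs_of_pos hn, div_le_iff₀ hn]
  calc |c| * |D| ≤ |c| * (δ * n) := mul_le_mul_of_nonneg_left hD (abs_nonneg c)
    _ = δ * |c| * n := by ring

/-- Exact bias of the hybrid Matching 1-1/2 estimator under a linear-in-time outcome
model: the bias equals β₂·(D₁ + D₂)/(|I₁|+|I₂|) and hence is bounded by δ·|β₂| under the
combined time-balance constraint, regardless of how the matches are split between the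
two types. -/
theorem matching112_exact_bias
    {Ω : Type*} [MeasurableSpace Ω] (μ : Measure Ω) [IsProbabilityMeasure μ]
    (I₁ : Finset (ℝ × ℝ)) (I₂ : Finset (ℝ × ℝ × ℝ))
    (hn : 0 < I₁.card + I₂.card)
    (β0 β1 β2 δ : ℝ)
    (ε : ℝ → ℝ → Ω → ℝ)
    (hint : ∀ t e, Integrable (ε t e) μ)
    (hmean : ∀ t e, ∫ ω, ε t e ω ∂μ = 0)
    (Y : ℝ → ℝ → Ω → ℝ)
    (hY : ∀ t e ω, Y t e ω = β0 + β1 * e + β2 * t + ε t e ω)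
    (hbal : |(∑ q ∈ I₁, (q.1 - q.2)) + ∑ q ∈ I₂, (q.1 - (q.2.1 + q.2.2) / 2)|
        ≤ δ * (I₁.card + I₂.card)) :
    ((∫ ω, ((I₁.card + I₂.card : ℕ) : ℝ)⁻¹ *
        ((∑ q ∈ I₁, (Y q.1 1 ω - Y q.2 0 ω))
          + ∑ q ∈ I₂, (Y q.1 1 ω - (Y q.2.1 0 ω + Y q.2.2 0 ω) / 2)) ∂μ) - β1
      = β2 * ((∑ q ∈ I₁, (q.1 - q.2)) + ∑ q ∈ I₂, (q.1 - (q.2.1 + q.2.2) / 2))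
          / (I₁.card + I₂.card))
    ∧ |(∫ ω, ((I₁.card + I₂.card : ℕ) : ℝ)⁻¹ *
        ((∑ q ∈ I₁, (Y q.1 1 ω - Y q.2 0 ω))
          + ∑ q ∈ I₂, (Y q.1 1 ω - (Y q.2.1 0 ω + Y q.2.2 0 ω) / 2)) ∂μ) - β1|
      ≤ δ * |β2| := by
  have hY_eq : Y = fun t e ω => β0 + β1 * e + β2 * t + ε t e ω := by ext; exact hY ..
  have hY_int : ∀ t e, Integrable (Y t e) μ := fun t e => by
    rw [hY_eq]; exact (integrable_const _).add (hint t e)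
  have hY_mean : ∀ t e, ∫ ω, Y t e ω ∂μ = β0 + β1 * e + β2 * t := fun t e => by
    rw [hY_eq, integral_add (integrable_const _) (hint t e), hmean, integral_const]; simp
  have hn' : (0 : ℝ) < I₁.card + I₂.card := by exact_mod_cast hn
  have hbias : (∫ ω, ((I₁.card + I₂.card : ℕ) : ℝ)⁻¹ *
        hybridContrast I₁ I₂ (fun t e => Y t e ω) ∂μ) - β1
      = β2 * hybridContrast I₁ I₂ (fun t _ => t) / (I₁.card + I₂.card) := by
    rw [integral_const_mul, integral_hybridContrast μ I₁ I₂ Y hY_int]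
    simp only [hY_mean, hybridContrast_affine]
    field_simp
    push_cast
    ring
  exact ⟨hbias, hbias ▸ abs_mul_div_le_of_abs_le hn' hbal⟩
end

section
/- Suppose potential outcomes have heterogeneous effects: Y_t(1) − Y_t(0) = τ_t for deterministic reals τ_t, and Y_t(0) = γ + ε_t with mean-zero errors. Let 𝒯_e* be the set of matched exposed periods under any of the matching schemes with imputation Y_t^imp(0) = average of matched unexposed outcomes. Then E[τ̂] = (1/|𝒯_e*|)·Σ_{t ∈ 𝒯_e*} τ_t; i.e., the matching estimator is unbiased for the average effect over the matched exposed periods, which may differ from the average effect over all exposed periods (1/|𝒯_e|)·Σ_{t ∈ 𝒯_e} τ_t whenever 𝒯_e* ⊊ 𝒯_e and the τ_t are non-constant. -/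
open MeasureTheory

section MatchingContrast

variable {ι Ω : Type*} [MeasurableSpace Ω] {μ : Measure Ω} {ε : ι → Ω → ℝ}

lemma Finset.inv_card_mul_sum_const_add {K : Type*} [Field K] [CharZero K] {s : Finset ι}
    (hs : s.Nonempty) (c : K) (f : ι → K) :
    (s.card : K)⁻¹ * ∑ u ∈ s, (c + f u) = c + (s.card : K)⁻¹ * ∑ u ∈ s, f u := by
  have hcard : (s.card : K) ≠ 0 := Nat.cast_ne_zero.mpr hs.card_pos.ne'
  rw [Finset.sum_add_distrib, Finset.sum_const, nsmul_eq_mul, mul_add, inv_mul_cancel_left₀ hcard]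

lemma integrable_sub_mul_sum (hint : ∀ u, Integrable (ε u) μ) (t : ι) (c : ℝ) (s : Finset ι) :
    Integrable (fun ω => ε t ω - c * ∑ u ∈ s, ε u ω) μ :=
  (hint t).sub ((integrable_finsetSum s fun u _ => hint u).const_mul c)

lemma integral_sub_mul_sum_eq_zero (hint : ∀ u, Integrable (ε u) μ)
    (hmean : ∀ u, ∫ ω, ε u ω ∂μ = 0) (t : ι) (c : ℝ) (s : Finset ι) :
    ∫ ω, ε t ω - c * ∑ u ∈ s, ε u ω ∂μ = 0 := by
  rw [integral_sub (hint t) ((integrable_finsetSum s fun u _ => hint u).const_mul c),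
    integral_const_mul, integral_finsetSum s fun u _ => hint u]
  simp only [hmean, Finset.sum_const_zero, mul_zero, sub_zero]

end MatchingContrast

theorem matching_unbiased_heterogeneous_general
    {Ω : Type*} [MeasurableSpace Ω] (μ : Measure Ω) [IsProbabilityMeasure μ]
    (Testar : Finset ℕ)
    (M : ℕ → Finset ℕ) (hM : ∀ t ∈ Testar, (M t).Nonempty)
    (τ : ℕ → ℝ) (γ : ℝ)
    (ε : ℕ → Ω → ℝ)
    (hint : ∀ t, Integrable (ε t) μ)
    (hmean : ∀ t, ∫ ω, ε t ω ∂μ = 0)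
    (Y0 : ℕ → Ω → ℝ) (hY0 : ∀ t ω, Y0 t ω = γ + ε t ω)
    (Y1 : ℕ → Ω → ℝ) (hY1 : ∀ t ω, Y1 t ω = Y0 t ω + τ t) :
    ∫ ω, (Testar.card : ℝ)⁻¹ *
        ∑ t ∈ Testar, (Y1 t ω - ((M t).card : ℝ)⁻¹ * ∑ u ∈ M t, Y0 u ω) ∂μ
      = (Testar.card : ℝ)⁻¹ * ∑ t ∈ Testar, τ t := by
  -- the baseline γ cancels against its own average over the matched periods
  have hcontrast : ∀ t ∈ Testar,
      (fun ω => Y1 t ω - ((M t).card : ℝ)⁻¹ * ∑ u ∈ M t, Y0 u ω)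
        = fun ω => τ t + (ε t ω - ((M t).card : ℝ)⁻¹ * ∑ u ∈ M t, ε u ω) := by
    intro t ht
    funext ω
    simp only [hY1, hY0, Finset.inv_card_mul_sum_const_add (hM t ht)]
    ring
  have hintegrable : ∀ t ∈ Testar,
      Integrable (fun ω => Y1 t ω - ((M t).card : ℝ)⁻¹ * ∑ u ∈ M t, Y0 u ω) μ := by
    intro t ht
    rw [hcontrast t ht]
    exact (integrable_const _).add (integrable_sub_mul_sum hint t _ _)
  rw [integral_const_mul, integral_finsetSum Testar hintegrable]
  congr 1
  refine Finset.sum_congr rfl fun t ht => ?_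
  rw [hcontrast t ht, integral_add (integrable_const _) (integrable_sub_mul_sum hint t _ _),
    integral_sub_mul_sum_eq_zero hint hmean, integral_const, probReal_univ, one_smul, add_zero]

/-- Under heterogeneous effects Y_t(1) − Y_t(0) = τ_t and a constant baseline
Y_t(0) = γ + ε_t with mean-zero errors, the matching estimator is unbiased for the
average effect over the matched exposed periods 𝒯_e* (a subset of the exposed periods). -/
theorem matching_unbiased_heterogeneous
    {Ω : Type*} [MeasurableSpace Ω] (μ : Measure Ω) [IsProbabilityMeasure μ]
    (Te Testar : Finset ℕ) (hsub : Testar ⊆ Te) (hne : Testar.Nonempty)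
    (M : ℕ → Finset ℕ) (hM : ∀ t ∈ Testar, (M t).Nonempty)
    (τ : ℕ → ℝ) (γ : ℝ)
    (ε : ℕ → Ω → ℝ)
    (hint : ∀ t, Integrable (ε t) μ)
    (hmean : ∀ t, ∫ ω, ε t ω ∂μ = 0)
    (Y0 : ℕ → Ω → ℝ) (hY0 : ∀ t ω, Y0 t ω = γ + ε t ω)
    (Y1 : ℕ → Ω → ℝ) (hY1 : ∀ t ω, Y1 t ω = Y0 t ω + τ t) :
    ∫ ω, (Testar.card : ℝ)⁻¹ *
        ∑ t ∈ Testar, (Y1 t ω - ((M t).card : ℝ)⁻¹ * ∑ u ∈ M t, Y0 u ω) ∂μ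
      = (Testar.card : ℝ)⁻¹ * ∑ t ∈ Testar, τ t :=
  matching_unbiased_heterogeneous_general μ Testar M hM τ γ ε hint hmean Y0 hY0 Y1 hY1
end
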